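/- arXiv:1410.3333 — 3 statements merged into one kernel-verified Lean document; each statement's English description precedes it below -/
import Mathlib

section
/- There exists a constant C (depending only on f) such that for all real x ≥ 2 and all 2 ≤ z ≤ y, ∑_{z ≤ p < y, p prime} #{n ∈ ℤ : x < n ≤ 2x and p² | f(n)} ≤ C·(x/z + y). -/
/-!
Irreducibility makes `f` coprime to `f'` over `ℚ`, so clearing denominators (via the resultant)
gives `a * f + b * f' = m` with `a, b ∈ ℤ[X]` and an integer `m ≠ 0`. For a prime `p ∤ m`, every
root of `f` mod `p` is simple, so by Hensel it lifts to at most one root mod `p²`; as `f` has at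
most `deg f` roots mod `p`, the interval `(x, 2x]` contains at most `deg f * (x / p² + 1)`
solutions of `p² ∣ f n`, and summing over `z ≤ p < y` costs `O(x / z + y)`. The remaining primes
are divisors of `m` that are at least `z`, so there are at most `|m| / z` of them, each
contributing at most `x + 1` solutions.
-/

open Polynomial Finset

theorem exists_mul_add_mul_derivative_eq_C {R K : Type*} [CommRing R] [Field K] {φ : R →+* K}
    (hφ : Function.Injective φ) {f : R[X]} (hf : (f.map φ).Separable) :
    ∃ (a b : R[X]) (m : R), m ≠ 0 ∧ a * f + b * derivative f = C m := by
  by_cases hdeg : f.natDegree = 0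
  · refine ⟨1, 0, f.coeff 0, fun h0 => hf.ne_zero ?_, by simp [← eq_C_of_natDegree_eq_zero hdeg]⟩
    rw [eq_C_of_natDegree_eq_zero hdeg, h0, C_0, Polynomial.map_zero]
  obtain ⟨a, b, -, -, hab⟩ :=
    exists_mul_add_mul_eq_C_resultant f (derivative f) le_rfl le_rfl (.inl hdeg)
  refine ⟨a, b, _, fun h0 => ?_, by rw [← hab]; ring⟩
  have hres : (f.map φ).resultant (derivative (f.map φ)) = 0 := by
    rw [derivative_map, natDegree_map_eq_of_injective hφ, natDegree_map_eq_of_injective hφ,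
      resultant_map_map, h0, map_zero]
  exact (resultant_eq_zero_iff.mp hres).2 hf

theorem separable_map_rat_of_irreducible {f : ℤ[X]} (hf : Irreducible f) :
    (f.map (Int.castRingHom ℚ)).Separable := by
  by_cases hdeg : f.natDegree = 0
  · rw [eq_C_of_natDegree_eq_zero hdeg, Polynomial.map_C, separable_C, isUnit_iff_ne_zero]
    intro h0
    exact hf.ne_zero (by rw [eq_C_of_natDegree_eq_zero hdeg]; simpa using h0)
  exact ((IsPrimitive.Int.irreducible_iff_irreducible_map_cast (hf.isPrimitive hdeg)).mp
    hf).separable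

theorem sq_dvd_sub_of_dvd_sub {R : Type*} [CommRing R] [IsDomain R] {p : R} (hp : Prime p)
    {f : R[X]} {x y : R} (hx : p ^ 2 ∣ f.eval x) (hy : p ^ 2 ∣ f.eval y)
    (hf' : ¬ p ∣ (derivative f).eval x) (hxy : p ∣ y - x) : p ^ 2 ∣ y - x := by
  obtain ⟨t, ht⟩ := hxy
  obtain ⟨k, hk⟩ := f.binomExpansion x (p * t)
  rw [show x + p * t = y by rw [← ht]; ring] at hk
  have hpt : p * p ∣ p * ((derivative f).eval x * t) := by
    have : p * ((derivative f).eval x * t) = f.eval y - f.eval x - k * (p * t) ^ 2 := by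
      rw [hk]; ring
    rw [← sq, this]
    exact dvd_sub (dvd_sub hy hx) ⟨k * t ^ 2, by ring⟩
  obtain ⟨s, rfl⟩ := ((hp.dvd_mul).mp ((mul_dvd_mul_iff_left hp.ne_zero).mp hpt)).resolve_left hf'
  exact ⟨s, by rw [ht]; ring⟩

theorem not_dvd_eval_derivative {R : Type*} [CommRing R] {f a b : R[X]} {m p x : R}
    (hid : a * f + b * derivative f = C m) (hpm : ¬ p ∣ m) (hx : p ∣ f.eval x) :
    ¬ p ∣ (derivative f).eval x := fun hx' => hpm <| by
  have := congrArg (eval x) hid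
  rw [eval_add, eval_mul, eval_mul, eval_C] at this
  exact this ▸ dvd_add (hx.mul_left _) (hx'.mul_left _)

theorem map_ne_zero_of_mul_add_mul_derivative_eq_C {R S : Type*} [CommRing R] [CommRing S]
    {φ : R →+* S} {f a b : R[X]} {m : R} (hid : a * f + b * derivative f = C m) (hm : φ m ≠ 0) :
    f.map φ ≠ 0 := fun h0 => hm <| by
  have := congrArg (Polynomial.map φ) hid
  rw [Polynomial.map_add, Polynomial.map_mul, Polynomial.map_mul, ← derivative_map, h0,
    Polynomial.map_C] at this
  simpa using congrArg (coeff · 0) this.symm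

theorem card_image_intCast_le_natDegree {p : ℕ} [Fact p.Prime] {f : ℤ[X]}
    (hf : f.map (Int.castRingHom (ZMod p)) ≠ 0) {S : Finset ℤ} (hS : ∀ n ∈ S, (p : ℤ) ∣ f.eval n) :
    #(S.image (Int.cast : ℤ → ZMod p)) ≤ f.natDegree := by
  have hsub :
      S.image (Int.cast : ℤ → ZMod p) ⊆ (f.map (Int.castRingHom (ZMod p))).roots.toFinset := by
    simp only [subset_iff, mem_image, Multiset.mem_toFinset, mem_roots hf]
    rintro _ ⟨n, hn, rfl⟩
    rw [IsRoot, eval_intCast_map, eq_intCast, ZMod.intCast_zmod_eq_zero_iff_dvd]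
    exact hS n hn
  calc _ ≤ _ := card_le_card hsub
    _ ≤ _ := Multiset.toFinset_card_le _
    _ ≤ _ := card_roots' _
    _ ≤ f.natDegree := natDegree_map_le

theorem Int.card_filter_Ioc_modEq_le {A B : ℤ} (hAB : A ≤ B) (c : ℤ) {r : ℤ} (hr : 0 < r) :
    (#{n ∈ Ioc A B | n ≡ c [ZMOD r]} : ℝ) ≤ (B - A) / r + 1 := by
  have hq : ((#{n ∈ Ioc A B | n ≡ c [ZMOD r]} : ℤ) : ℚ) ≤ (B - A) / r + 1 := by
    have hu := Int.floor_le ((B - c) / (r : ℚ))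
    have hv := Int.lt_floor_add_one ((A - c) / (r : ℚ))
    have hdiff : (B - c) / (r : ℚ) - (A - c) / r = (B - A) / r := by ring
    have hpos : (0 : ℚ) ≤ (B - A) / r :=
      div_nonneg (by exact_mod_cast sub_nonneg.mpr hAB) (by exact_mod_cast hr.le)
    rw [Int.Ioc_filter_modEq_card A B hr c]
    push_cast
    exact max_le (by linarith) (by linarith)
  exact_mod_cast hq

theorem card_filter_sq_dvd_eval_le {f a b : ℤ[X]} {m : ℤ} (hid : a * f + b * derivative f = C m)
    {p : ℕ} (hp : p.Prime) (hpm : ¬ (p : ℤ) ∣ m) {A B : ℤ} (hAB : A ≤ B) :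
    (#{n ∈ Ioc A B | (p : ℤ) ^ 2 ∣ f.eval n} : ℝ) ≤ f.natDegree * ((B - A) / (p : ℝ) ^ 2 + 1) := by
  have := Fact.mk hp
  set S := {n ∈ Ioc A B | (p : ℤ) ^ 2 ∣ f.eval n}
  have hS : ∀ n ∈ S, n ∈ Ioc A B ∧ (p : ℤ) ^ 2 ∣ f.eval n := fun n hn => mem_filter.mp hn
  -- two points of `S` in the same class mod `p` are in the same class mod `p ^ 2`
  have hfiber : ∀ r ∈ S.image (Int.cast : ℤ → ZMod p),
      (#{n ∈ S | ((n : ℤ) : ZMod p) = r} : ℝ) ≤ (B - A) / (p : ℝ) ^ 2 + 1 := by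
    rintro _ hr
    obtain ⟨n₀, hn₀, rfl⟩ := mem_image.mp hr
    have hsub :
        {n ∈ S | ((n : ℤ) : ZMod p) = n₀} ⊆ {n ∈ Ioc A B | n ≡ n₀ [ZMOD (p : ℤ) ^ 2]} := by
      intro n hn
      obtain ⟨hnS, hcong⟩ := mem_filter.mp hn
      refine mem_filter.mpr ⟨(hS n hnS).1, Int.modEq_iff_dvd.mpr ?_⟩
      exact sq_dvd_sub_of_dvd_sub (Nat.prime_iff_prime_int.mp hp) (hS n hnS).2 (hS n₀ hn₀).2
        (not_dvd_eval_derivative hid hpm (dvd_trans (dvd_pow_self _ two_ne_zero) (hS n hnS).2))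
        ((ZMod.intCast_eq_intCast_iff_dvd_sub _ _ _).mp hcong)
    calc (#{n ∈ S | ((n : ℤ) : ZMod p) = n₀} : ℝ)
        ≤ #{n ∈ Ioc A B | n ≡ n₀ [ZMOD (p : ℤ) ^ 2]} := by exact_mod_cast card_le_card hsub
      _ ≤ (B - A) / (p : ℝ) ^ 2 + 1 := by
        have h := Int.card_filter_Ioc_modEq_le hAB n₀ (r := (p : ℤ) ^ 2)
          (pow_pos (by exact_mod_cast hp.pos) 2)
        push_cast at h
        exact h
  have hroots : #(S.image (Int.cast : ℤ → ZMod p)) ≤ f.natDegree :=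
    card_image_intCast_le_natDegree
      (map_ne_zero_of_mul_add_mul_derivative_eq_C hid
        (by simpa [ZMod.intCast_zmod_eq_zero_iff_dvd]))
      fun n hn => dvd_trans (dvd_pow_self _ two_ne_zero) (hS n hn).2
  calc (#S : ℝ)
      = ∑ r ∈ S.image (Int.cast : ℤ → ZMod p), (#{n ∈ S | ((n : ℤ) : ZMod p) = r} : ℝ) := by
        rw [card_eq_sum_card_image (Int.cast : ℤ → ZMod p) S]; push_cast; rfl
    _ ≤ #(S.image (Int.cast : ℤ → ZMod p)) * ((B - A) / (p : ℝ) ^ 2 + 1) := by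
        simpa only [nsmul_eq_mul] using sum_le_card_nsmul _ _ _ hfiber
    _ ≤ f.natDegree * ((B - A) / (p : ℝ) ^ 2 + 1) := by
        have : (A : ℝ) ≤ B := by exact_mod_cast hAB
        gcongr

theorem sum_Ico_ceil_inv_sq_le {z : ℝ} (hz : 2 ≤ z) (M : ℕ) :
    ∑ n ∈ Ico ⌈z⌉₊ M, ((n : ℝ) ^ 2)⁻¹ ≤ 2 / z := by
  set N := ⌈z⌉₊
  have hzN : z ≤ N := Nat.le_ceil z
  have hN : 2 ≤ N := by exact_mod_cast hz.trans hzN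
  calc ∑ n ∈ Ico N M, ((n : ℝ) ^ 2)⁻¹
      ≤ ∑ n ∈ Ioc (N - 1) (M + N), ((n : ℝ) ^ 2)⁻¹ :=
        sum_le_sum_of_subset_of_nonneg (fun n hn => by simp only [mem_Ico, mem_Ioc] at hn ⊢; omega)
          fun _ _ _ => by positivity
    _ ≤ ((N - 1 : ℕ) : ℝ)⁻¹ - ((M + N : ℕ) : ℝ)⁻¹ := sum_Ioc_inv_sq_le_sub (by omega) (by omega)
    _ ≤ 2 / z := by
      have hinv : ((N : ℝ) - 1)⁻¹ ≤ (z / 2)⁻¹ := inv_anti₀ (by positivity) (by linarith)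
      rw [inv_div] at hinv
      rw [Nat.cast_sub (by omega), Nat.cast_one]
      have : (0 : ℝ) ≤ ((M + N : ℕ) : ℝ)⁻¹ := by positivity
      linarith

theorem Nat.card_filter_dvd_le_div {K : ℕ} (hK : K ≠ 0) {N : ℕ} (hN : 0 < N) {s : Finset ℕ}
    (hs : ∀ d ∈ s, N ≤ d) : #{d ∈ s | d ∣ K} ≤ K / N := by
  -- `d ↦ K / d` is injective on divisors and lands in `[1, K / N]`
  calc #{d ∈ s | d ∣ K} ≤ #(Icc 1 (K / N)) := by
        refine card_le_card_of_injOn (K / ·) (fun d hd => ?_) fun d₁ hd₁ d₂ hd₂ h => ?_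
        · obtain ⟨hds, hdK⟩ := mem_filter.mp hd
          simp only [coe_Icc, Set.mem_Icc]
          exact ⟨Nat.div_pos (Nat.le_of_dvd (by omega) hdK) (hN.trans_le (hs d hds)),
            Nat.div_le_div_left (hs d hds) hN⟩
        · rw [← Nat.div_div_self (mem_filter.mp hd₁).2 hK,
            ← Nat.div_div_self (mem_filter.mp hd₂).2 hK]
          exact congrArg (K / ·) h
    _ = K / N := by simp

theorem card_Ico_ceil_ceil_le {z y : ℝ} (hz : 0 < z) (hzy : z ≤ y) :
    (#(Ico ⌈z⌉₊ ⌈y⌉₊) : ℝ) ≤ y := by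
  have hz1 : 1 ≤ ⌈z⌉₊ := Nat.one_le_iff_ne_zero.mpr (Nat.ceil_pos.mpr hz).ne'
  have hy : (⌈y⌉₊ : ℝ) < y + 1 := Nat.ceil_lt_add_one (hz.le.trans hzy)
  rw [Nat.card_Ico, Nat.cast_sub (Nat.ceil_le_ceil hzy)]
  have : (1 : ℝ) ≤ ⌈z⌉₊ := by exact_mod_cast hz1
  linarith

theorem floor_two_mul_sub_floor_le {x : ℝ} (hx : 1 ≤ x) : (⌊2 * x⌋ - ⌊x⌋ : ℝ) ≤ 2 * x := by
  have h₁ := Int.floor_le (2 * x)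
  have h₂ := Int.sub_one_lt_floor x
  linarith

theorem sum_card_filter_sq_dvd_eval_le {f a b : ℤ[X]} {m : ℤ}
    (hid : a * f + b * derivative f = C m) {A B : ℤ} (hAB : A ≤ B) {z : ℝ} (hz : 2 ≤ z) {M : ℕ}
    {P : Finset ℕ} (hPM : P ⊆ Ico ⌈z⌉₊ M) (hP : ∀ p ∈ P, p.Prime ∧ ¬ (p : ℤ) ∣ m) :
    ∑ p ∈ P, (#{n ∈ Ioc A B | (p : ℤ) ^ 2 ∣ f.eval n} : ℝ) ≤
      f.natDegree * ((B - A) * (2 / z) + #(Ico ⌈z⌉₊ M)) := by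
  have hBA : (0 : ℝ) ≤ B - A := sub_nonneg.mpr (by exact_mod_cast hAB)
  calc ∑ p ∈ P, (#{n ∈ Ioc A B | (p : ℤ) ^ 2 ∣ f.eval n} : ℝ)
      ≤ ∑ p ∈ P, (f.natDegree * ((B - A) / (p : ℝ) ^ 2 + 1) : ℝ) :=
        sum_le_sum fun p hp => card_filter_sq_dvd_eval_le hid (hP p hp).1 (hP p hp).2 hAB
    _ ≤ ∑ n ∈ Ico ⌈z⌉₊ M, (f.natDegree * ((B - A) / (n : ℝ) ^ 2 + 1) : ℝ) :=
        sum_le_sum_of_subset_of_nonneg hPM fun _ _ _ => by positivity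
    _ = f.natDegree * ((B - A) * ∑ n ∈ Ico ⌈z⌉₊ M, ((n : ℝ) ^ 2)⁻¹ + #(Ico ⌈z⌉₊ M)) := by
        simp only [← mul_sum, sum_add_distrib, div_eq_mul_inv, sum_const, nsmul_one]
    _ ≤ f.natDegree * ((B - A) * (2 / z) + #(Ico ⌈z⌉₊ M)) := by
        gcongr
        exact sum_Ico_ceil_inv_sq_le hz M

theorem sum_card_filter_le_of_dvd {A B : ℤ} (hAB : A ≤ B) {K : ℕ} (hK : K ≠ 0) {z : ℝ}
    (hz : 0 < z) {P : Finset ℕ} (hP : ∀ p ∈ P, z ≤ p ∧ p ∣ K) (q : ℕ → ℤ → Prop)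
    [∀ p, DecidablePred (q p)] :
    ∑ p ∈ P, (#{n ∈ Ioc A B | q p n} : ℝ) ≤ K / z * (B - A) := by
  have hcard : (#P : ℝ) ≤ K / z := by
    have hN : 0 < ⌈z⌉₊ := Nat.ceil_pos.mpr hz
    have hPK : P = {d ∈ P | d ∣ K} := (filter_true_of_mem fun p hp => (hP p hp).2).symm
    calc (#P : ℝ) ≤ ((K / ⌈z⌉₊ : ℕ) : ℝ) := by
          rw [hPK]
          exact_mod_cast Nat.card_filter_dvd_le_div hK hN fun p hp => Nat.ceil_le.mpr (hP p hp).1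
      _ ≤ K / ⌈z⌉₊ := Nat.cast_div_le
      _ ≤ K / z := div_le_div_of_nonneg_left (by positivity) hz (Nat.le_ceil z)
  calc ∑ p ∈ P, (#{n ∈ Ioc A B | q p n} : ℝ) ≤ ∑ _p ∈ P, ((B - A : ℤ) : ℝ) :=
        sum_le_sum fun p _ => by
          have h : #{n ∈ Ioc A B | q p n} ≤ (B - A).toNat := Int.card_Ioc A B ▸ card_filter_le _ _
          have : (#{n ∈ Ioc A B | q p n} : ℤ) ≤ B - A := by omega
          exact_mod_cast this
    _ = #P * (B - A) := by rw [sum_const, nsmul_eq_mul]; push_cast; ring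
    _ ≤ K / z * (B - A) := by
      gcongr
      exact sub_nonneg.mpr (by exact_mod_cast hAB)

theorem square_divisors_sum_bound_general (f : Polynomial ℤ) (hirr : Irreducible f) :
    ∃ C : ℝ, ∀ x z y : ℝ, 2 ≤ x → 2 ≤ z → z ≤ y →
      ∑ p ∈ (Finset.Ico ⌈z⌉₊ ⌈y⌉₊).filter Nat.Prime,
          ((((Finset.Ioc ⌊x⌋ ⌊2 * x⌋).filter
            (fun n : ℤ => ((p : ℤ)) ^ 2 ∣ f.eval n)).card : ℝ)) ≤
        C * (x / z + y) := by
  obtain ⟨a, b, m, hm, hid⟩ :=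
    exists_mul_add_mul_derivative_eq_C Int.cast_injective (separable_map_rat_of_irreducible hirr)
  refine ⟨2 * m.natAbs + 4 * f.natDegree, fun x z y hx hz hzy => ?_⟩
  set P := {p ∈ Ico ⌈z⌉₊ ⌈y⌉₊ | p.Prime}
  have hP : ∀ p ∈ P, z ≤ p ∧ p.Prime := fun p hp => by
    obtain ⟨hp, hpp⟩ := mem_filter.mp hp
    exact ⟨Nat.ceil_le.mp (mem_Ico.mp hp).1, hpp⟩
  have hAB : ⌊x⌋ ≤ ⌊2 * x⌋ := Int.floor_mono (by linarith)
  have hbad := sum_card_filter_le_of_dvd hAB (Int.natAbs_ne_zero.mpr hm) (z := z) (by linarith)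
    (P := {p ∈ P | p ∣ m.natAbs})
    (fun p hp => ⟨(hP p (mem_filter.mp hp).1).1, (mem_filter.mp hp).2⟩)
    (fun p n => (p : ℤ) ^ 2 ∣ f.eval n)
  have hgood := sum_card_filter_sq_dvd_eval_le hid hAB hz (P := {p ∈ P | ¬ p ∣ m.natAbs})
    ((filter_subset _ _).trans (filter_subset _ _))
    fun p hp => ⟨(hP p (mem_filter.mp hp).1).2,
      fun h => (mem_filter.mp hp).2 (Int.natCast_dvd.mp h)⟩
  rw [← sum_filter_add_sum_filter_not P (· ∣ m.natAbs)]
  have hL := floor_two_mul_sub_floor_le (by linarith : 1 ≤ x)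
  have hI := card_Ico_ceil_ceil_le (by linarith) hzy
  calc _ ≤ m.natAbs / z * (⌊2 * x⌋ - ⌊x⌋) +
          f.natDegree * ((⌊2 * x⌋ - ⌊x⌋) * (2 / z) + #(Ico ⌈z⌉₊ ⌈y⌉₊)) := add_le_add hbad hgood
    _ ≤ m.natAbs / z * (2 * x) + f.natDegree * (2 * x * (2 / z) + y) := by gcongr
    _ = 2 * m.natAbs * (x / z) + 4 * f.natDegree * (x / z) + f.natDegree * y := by ring
    _ ≤ _ := by
      have : (0 : ℝ) ≤ y := by linarith
      nlinarith [mul_nonneg (Nat.cast_nonneg m.natAbs : (0 : ℝ) ≤ _) this,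
        mul_nonneg (Nat.cast_nonneg f.natDegree : (0 : ℝ) ≤ _) this]

theorem square_divisors_sum_bound (f : Polynomial ℤ) (hirr : Irreducible f)
    (hdeg : 1 ≤ f.natDegree) :
    ∃ C : ℝ, ∀ x z y : ℝ, 2 ≤ x → 2 ≤ z → z ≤ y →
      ∑ p ∈ (Finset.Ico ⌈z⌉₊ ⌈y⌉₊).filter Nat.Prime,
          ((((Finset.Ioc ⌊x⌋ ⌊2 * x⌋).filter
            (fun n : ℤ => ((p : ℤ)) ^ 2 ∣ f.eval n)).card : ℝ)) ≤
        C * (x / z + y) :=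
  square_divisors_sum_bound_general f hirr
end

section
/- Let p be a prime with p ∤ f(0), let d be a positive integer with gcd(d, p) = 1, and let x ≥ 1 be real. Then |#{n ∈ ℤ : x < n ≤ 2x, p | f(n) and d | n·f(n)} − x·ν₁(p)·ν₂(d)/(pd)| ≤ ν₁(p)·ν₂(d). -/
open Polynomial

/-- ν₁(d) = #{a mod d : gcd(a,d) = 1 and f(a) ≡ 0 (mod d)} -/
def nu1 (f : Polynomial ℤ) (d : ℕ) : ℕ :=
  ((Finset.range d).filter (fun a : ℕ => Nat.gcd a d = 1 ∧ (d : ℤ) ∣ f.eval (a : ℤ))).card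

/-- ν₂(d) = #{a mod d : a·f(a) ≡ 0 (mod d)} -/
def nu2 (f : Polynomial ℤ) (d : ℕ) : ℕ :=
  ((Finset.range d).filter (fun a : ℕ => (d : ℤ) ∣ (a : ℤ) * f.eval (a : ℤ))).card

/-!
Whether `p ∣ f n` and `d ∣ n f(n)` depends only on `n mod pd`. By the Chinese remainder theorem
the admissible residues mod `pd` number `ν₁(p) ν₂(d)`; the coprimality condition in `ν₁(p)` is
automatic because `p ∤ f(0)`. Each residue class meets `(x, 2x]` in a difference of two floors,
i.e. in `x / (pd) + θ` integers with `|θ| < 1`, and summing over admissible residues gives the bound.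
-/

open Finset

theorem Polynomial.dvd_eval_iff_of_dvd_sub {R : Type*} [CommRing R] (g : R[X]) {q m n : R}
    (h : q ∣ m - n) : q ∣ g.eval m ↔ q ∣ g.eval n :=
  dvd_iff_dvd_of_dvd_sub (h.trans (sub_dvd_eval_sub m n g))

theorem Polynomial.coprime_of_dvd_eval {f : ℤ[X]} {p : ℕ} (hp : p.Prime)
    (hpf : ¬ (p : ℤ) ∣ f.coeff 0) {a : ℕ} (ha : (p : ℤ) ∣ f.eval (a : ℤ)) : a.Coprime p := by
  rw [Nat.coprime_comm, hp.coprime_iff_not_dvd]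
  intro hpa
  apply hpf
  rw [coeff_zero_eq_eval_zero]
  exact (dvd_eval_iff_of_dvd_sub f (by simpa using Int.natCast_dvd_natCast.2 hpa)).1 ha

theorem nu1_eq_card_filter_dvd_eval {f : ℤ[X]} {p : ℕ} (hp : p.Prime)
    (hpf : ¬ (p : ℤ) ∣ f.coeff 0) : nu1 f p = #{a ∈ range p | (p : ℤ) ∣ f.eval ((a : ℕ) : ℤ)} := by
  unfold nu1
  congr 1
  exact filter_congr fun a _ => and_iff_right_of_imp (coprime_of_dvd_eval hp hpf)

theorem Nat.card_filter_range_mul_of_coprime {m n : ℕ} (hmn : m.Coprime n) (A B : ℕ → Prop)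
    [DecidablePred A] [DecidablePred B] :
    #{k ∈ range (m * n) | A (k % m) ∧ B (k % n)} = #{a ∈ range m | A a} * #{b ∈ range n | B b} := by
  rw [← card_product, ← filter_product]
  refine card_bij (fun k _ => (k % m, k % n)) ?_ ?_ ?_
  · intro k hk
    simp only [mem_filter, mem_range, mem_product] at hk ⊢
    exact ⟨⟨Nat.mod_lt _ (Nat.pos_of_mul_pos_right (k.zero_le.trans_lt hk.1)),
      Nat.mod_lt _ (Nat.pos_of_mul_pos_left (k.zero_le.trans_lt hk.1))⟩, hk.2⟩
  · intro k₁ hk₁ k₂ hk₂ h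
    simp only [mem_filter, mem_range, Prod.mk.injEq] at hk₁ hk₂ h
    exact ((Nat.modEq_and_modEq_iff_modEq_mul hmn).1 h).eq_of_lt_of_lt hk₁.1 hk₂.1
  · rintro ⟨a, b⟩ hab
    simp only [mem_filter, mem_range, mem_product] at hab
    obtain ⟨⟨ha, hb⟩, hAB⟩ := hab
    let k := Nat.chineseRemainder hmn a b
    have hka : k % m = a := Eq.trans k.2.1 (Nat.mod_eq_of_lt ha)
    have hkb : k % n = b := Eq.trans k.2.2 (Nat.mod_eq_of_lt hb)
    refine ⟨k, ?_, by rw [hka, hkb]⟩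
    simp only [mem_filter, mem_range, hka, hkb]
    exact ⟨Nat.chineseRemainder_lt_mul hmn a b (by omega) (by omega), hAB⟩

theorem Int.abs_card_filter_Ioc_floor_modEq_sub_le {M : ℕ} (hM : 0 < M) (v : ℤ) {α β : ℝ}
    (hαβ : α ≤ β) :
    |(#{n ∈ Ioc ⌊α⌋ ⌊β⌋ | n ≡ v [ZMOD M]} : ℝ) - (β - α) / M| ≤ 1 := by
  have hfloor : ∀ γ : ℝ, ⌊((⌊γ⌋ : ℚ) - v) / ((M : ℤ) : ℚ)⌋ = ⌊(γ - v) / M⌋ := by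
    intro γ
    rw [Int.cast_natCast, Int.floor_div_natCast, Int.floor_div_natCast, ← Int.cast_sub,
      Int.floor_intCast, Int.floor_sub_intCast]
  have hle : ⌊(α - v) / M⌋ ≤ ⌊(β - v) / M⌋ := Int.floor_le_floor (by gcongr)
  have hcard : (#{n ∈ Ioc ⌊α⌋ ⌊β⌋ | n ≡ v [ZMOD M]} : ℤ) = ⌊(β - v) / M⌋ - ⌊(α - v) / M⌋ := by
    rw [Int.Ioc_filter_modEq_card _ _ (by exact_mod_cast hM), hfloor, hfloor,
      max_eq_left (sub_nonneg.2 hle)]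
  rw [show (#{n ∈ Ioc ⌊α⌋ ⌊β⌋ | n ≡ v [ZMOD M]} : ℝ) = ((⌊(β - v) / M⌋ - ⌊(α - v) / M⌋ : ℤ) : ℝ)
    by exact_mod_cast hcard, Int.cast_sub, abs_le]
  have hdiff : (β - v) / M - (α - v) / M = (β - α) / M := by ring
  constructor <;> linarith [Int.floor_le ((β - v) / M), Int.lt_floor_add_one ((β - v) / M),
    Int.floor_le ((α - v) / M), Int.lt_floor_add_one ((α - v) / M)]

theorem Int.abs_card_filter_Ioc_floor_sub_mul_card_le {P : ℤ → Prop} [DecidablePred P] {M : ℕ}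
    (hM : 0 < M) (hP : ∀ m n, m ≡ n [ZMOD M] → (P m ↔ P n)) {α β : ℝ} (hαβ : α ≤ β) :
    |(#{n ∈ Ioc ⌊α⌋ ⌊β⌋ | P n} : ℝ) - (β - α) / M * #{a ∈ Finset.range M | P ((a : ℕ) : ℤ)}| ≤
      #{a ∈ Finset.range M | P ((a : ℕ) : ℤ)} := by
  set S := {a ∈ Finset.range M | P ((a : ℕ) : ℤ)}
  have hM' : (0 : ℤ) < M := by exact_mod_cast hM
  have hfiber : #{n ∈ Ioc ⌊α⌋ ⌊β⌋ | P n} = ∑ a ∈ S, #{n ∈ Ioc ⌊α⌋ ⌊β⌋ | n ≡ a [ZMOD M]} := by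
    rw [card_eq_sum_card_fiberwise (f := fun n : ℤ => (n % M).toNat) (t := S)]
    · refine sum_congr rfl fun a ha => ?_
      simp only [S, mem_filter, mem_range] at ha
      rw [filter_filter]
      refine congrArg card (filter_congr fun n _ => ?_)
      have hmod : (n % M).toNat = a ↔ n ≡ a [ZMOD M] := by
        have ha' : (a : ℤ) % M = a := Int.emod_eq_of_lt (by positivity) (by exact_mod_cast ha.1)
        rw [Int.ModEq, ha']
        have := Int.emod_nonneg n hM'.ne'
        omega
      rw [hmod]
      exact ⟨And.right, fun h => ⟨(hP _ _ h).2 ha.2, h⟩⟩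
    · intro n hn
      simp only [coe_filter, Set.mem_ofPred_eq, S, mem_range] at hn ⊢
      refine ⟨by have := Int.emod_lt_of_pos n hM'; omega, (hP _ _ ?_).1 hn.2⟩
      rw [Int.ModEq, Int.toNat_of_nonneg (Int.emod_nonneg n hM'.ne'), Int.emod_emod]
  calc |(#{n ∈ Ioc ⌊α⌋ ⌊β⌋ | P n} : ℝ) - (β - α) / M * #S|
      = |∑ a ∈ S, ((#{n ∈ Ioc ⌊α⌋ ⌊β⌋ | n ≡ a [ZMOD M]} : ℝ) - (β - α) / M)| := by
        rw [hfiber, sum_sub_distrib, sum_const, nsmul_eq_mul, mul_comm, Nat.cast_sum]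
    _ ≤ ∑ a ∈ S, |(#{n ∈ Ioc ⌊α⌋ ⌊β⌋ | n ≡ a [ZMOD M]} : ℝ) - (β - α) / M| :=
        abs_sum_le_sum_abs _ _
    _ ≤ ∑ _a ∈ S, (1 : ℝ) := sum_le_sum fun a _ => abs_card_filter_Ioc_floor_modEq_sub_le hM a hαβ
    _ = #S := by simp

theorem count_in_interval_general (f : Polynomial ℤ)
    (p : ℕ) (hp : p.Prime) (hpf : ¬ ((p : ℤ) ∣ f.coeff 0))
    (d : ℕ) (hd : 0 < d) (hcop : Nat.Coprime d p) (x : ℝ) (hx : 1 ≤ x) :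
    |(((Finset.Ioc ⌊x⌋ ⌊2 * x⌋).filter
        (fun n : ℤ => (p : ℤ) ∣ f.eval n ∧ (d : ℤ) ∣ n * f.eval n)).card : ℝ) -
      x * (nu1 f p : ℝ) * (nu2 f d : ℝ) / ((p : ℝ) * (d : ℝ))| ≤
      (nu1 f p : ℝ) * (nu2 f d : ℝ) := by
  set P : ℤ → Prop := fun n => (p : ℤ) ∣ f.eval n ∧ (d : ℤ) ∣ n * f.eval n
  have hXf : ∀ n, (X * f).eval n = n * f.eval n := fun n => by rw [eval_mul, eval_X]
  have hP : ∀ m n, m ≡ n [ZMOD (p * d : ℕ)] → (P m ↔ P n) := by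
    intro m n hmn
    rw [Nat.cast_mul] at hmn
    simp only [P, ← hXf]
    exact and_congr (dvd_eval_iff_of_dvd_sub f (hmn.of_mul_right _).symm.dvd)
      (dvd_eval_iff_of_dvd_sub _ (hmn.of_mul_left _).symm.dvd)
  have hcount : #{a ∈ range (p * d) | P ((a : ℕ) : ℤ)} = nu1 f p * nu2 f d := by
    rw [nu1_eq_card_filter_dvd_eval hp hpf, nu2, ← Nat.card_filter_range_mul_of_coprime hcop.symm]
    refine congrArg card (filter_congr fun a _ => ?_)
    simp only [P, ← hXf]
    exact and_congr (dvd_eval_iff_of_dvd_sub f (Nat.mod_modEq a p).dvd)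
      (dvd_eval_iff_of_dvd_sub _ (Nat.mod_modEq a d).dvd)
  have hbound := Int.abs_card_filter_Ioc_floor_sub_mul_card_le (Nat.mul_pos hp.pos hd) hP
    (show x ≤ 2 * x by linarith)
  rw [hcount] at hbound
  convert hbound using 3 <;> push_cast <;> ring

theorem count_in_interval (f : Polynomial ℤ) (hconst : f.coeff 0 ≠ 0)
    (p : ℕ) (hp : p.Prime) (hpf : ¬ ((p : ℤ) ∣ f.coeff 0))
    (d : ℕ) (hd : 0 < d) (hcop : Nat.Coprime d p) (x : ℝ) (hx : 1 ≤ x) :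
    |(((Finset.Ioc ⌊x⌋ ⌊2 * x⌋).filter
        (fun n : ℤ => (p : ℤ) ∣ f.eval n ∧ (d : ℤ) ∣ n * f.eval n)).card : ℝ) -
      x * (nu1 f p : ℝ) * (nu2 f d : ℝ) / ((p : ℝ) * (d : ℝ))| ≤
      (nu1 f p : ℝ) * (nu2 f d : ℝ) :=
  count_in_interval_general f p hp hpf d hd hcop x hx
end

section
/- Let n and N be positive integers with 2 ≤ n ≤ N, let 0 < β < 1, set y = N^β, and let r be a positive integer. If ∑_{p | n, p < y, p prime} (1 − log p/log y) < r + 1 − 1/β, then #{p prime : p | n, p < y} + ∑_{p | n, p ≥ y, p prime} v_p(n) ≤ r, where v_p(n) denotes the p-adic valuation of n. -/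
theorem weight_positive_implies_few_factors (n N : ℕ) (hn : 2 ≤ n) (hnN : n ≤ N)
    (β : ℝ) (hβ : 0 < β) (hβ1 : β < 1) (r : ℕ) (hr : 0 < r)
    (h : ∑ p ∈ n.primeFactors.filter (fun p : ℕ => (p : ℝ) < (N : ℝ) ^ β),
          (1 - Real.log p / Real.log ((N : ℝ) ^ β)) <
        (r : ℝ) + 1 - 1 / β) :
    (n.primeFactors.filter (fun p : ℕ => (p : ℝ) < (N : ℝ) ^ β)).card +
      ∑ p ∈ n.primeFactors.filter (fun p : ℕ => (N : ℝ) ^ β ≤ (p : ℝ)),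
        n.factorization p ≤ r := by
  set y : ℝ := (N : ℝ) ^ β with hy
  have hN2 : 2 ≤ N := hn.trans hnN
  have hN1 : (1:ℝ) < (N:ℝ) := by exact_mod_cast Nat.lt_of_lt_of_le one_lt_two hN2
  have hlogN : 0 < Real.log N := Real.log_pos hN1
  have hlogy : Real.log y = β * Real.log N := Real.log_rpow (by positivity) β
  have hlogy0 : 0 < Real.log y := by rw [hlogy]; positivity
  set S := n.primeFactors.filter (fun p : ℕ => (p : ℝ) < y) with hS
  set Lg := n.primeFactors.filter (fun p : ℕ => y ≤ (p : ℝ)) with hLg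
  have hn0 : n ≠ 0 := by omega
  have hprod : (∏ p ∈ n.primeFactors, p ^ n.factorization p : ℕ) = n := by
    simpa [Finsupp.prod] using Nat.factorization_prod_pow_eq_self hn0
  -- log n as sum over prime factors
  have hlog_n : Real.log n = ∑ p ∈ n.primeFactors, (n.factorization p : ℝ) * Real.log p := by
    conv_lhs => rw [← hprod]
    push_cast
    rw [Real.log_prod]
    · refine Finset.sum_congr rfl fun p hp => ?_
      rw [Real.log_pow]
    · intro p hp
      have hpp : p.Prime := Nat.prime_of_mem_primeFactors hp
      exact pow_ne_zero _ (by exact_mod_cast hpp.pos.ne')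
  -- split the sum
  have hsplit : ∑ p ∈ n.primeFactors, (n.factorization p : ℝ) * Real.log p
      = ∑ p ∈ S, (n.factorization p : ℝ) * Real.log p
        + ∑ p ∈ Lg, (n.factorization p : ℝ) * Real.log p := by
    rw [hS, hLg, ← Finset.sum_filter_add_sum_filter_not n.primeFactors
      (fun p : ℕ => (p : ℝ) < y)]
    congr 1
    apply Finset.sum_congr
    · ext p; simp [not_lt]
    · intro _ _; rfl
  -- lower bound each part
  have hSbound : ∑ p ∈ S, Real.log p ≤ ∑ p ∈ S, (n.factorization p : ℝ) * Real.log p := by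
    refine Finset.sum_le_sum fun p hp => ?_
    have hpp : p.Prime := Nat.prime_of_mem_primeFactors (Finset.mem_filter.mp hp).1
    have h1 : 1 ≤ n.factorization p :=
      (Nat.Prime.factorization_pos_of_dvd hpp hn0
        (Nat.dvd_of_mem_primeFactors (Finset.mem_filter.mp hp).1))
    have hlp : 0 ≤ Real.log p := Real.log_nonneg (by exact_mod_cast hpp.one_lt.le)
    nlinarith [(by exact_mod_cast h1 : (1:ℝ) ≤ (n.factorization p : ℝ))]
  have hLbound : (∑ p ∈ Lg, (n.factorization p : ℕ) : ℝ) * Real.log y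
      ≤ ∑ p ∈ Lg, (n.factorization p : ℝ) * Real.log p := by
    push_cast
    rw [Finset.sum_mul]
    refine Finset.sum_le_sum fun p hp => ?_
    have hyp : y ≤ (p : ℝ) := (Finset.mem_filter.mp hp).2
    have : Real.log y ≤ Real.log p := Real.log_le_log (by positivity) hyp
    have h0 : (0:ℝ) ≤ (n.factorization p : ℝ) := by positivity
    nlinarith
  -- log n ≤ log y / β
  have hlogn_le : Real.log n ≤ Real.log y / β := by
    rw [hlogy]
    have : Real.log n ≤ Real.log N :=
      Real.log_le_log (by exact_mod_cast hn.trans' one_le_two) (by exact_mod_cast hnN)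
    rw [mul_comm, mul_div_assoc, div_self hβ.ne', mul_one]
    exact this
  set m : ℕ := ∑ p ∈ Lg, n.factorization p with hm
  have hmcast : (m : ℝ) = ∑ p ∈ Lg, (n.factorization p : ℝ) := by
    rw [hm]; push_cast; rfl
  have key : ∑ p ∈ S, Real.log p ≤ Real.log y / β - (m : ℝ) * Real.log y := by
    have := hlog_n ▸ hlogn_le
    rw [hsplit] at this
    rw [hmcast]
    linarith
  -- rewrite hypothesis
  have hsum : ∑ p ∈ S, (1 - Real.log p / Real.log y)
      = (S.card : ℝ) - (∑ p ∈ S, Real.log p) / Real.log y := by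
    rw [Finset.sum_sub_distrib, Finset.sum_const, nsmul_eq_mul, mul_one, ← Finset.sum_div]
  have h' : (S.card : ℝ) - (∑ p ∈ S, Real.log p) / Real.log y < (r : ℝ) + 1 - 1 / β := by
    rw [← hsum]; exact h
  have hdiv : (∑ p ∈ S, Real.log p) / Real.log y ≤ 1 / β - (m : ℝ) := by
    rw [div_le_iff₀ hlogy0]
    have : (1 / β - (m : ℝ)) * Real.log y = Real.log y / β - (m : ℝ) * Real.log y := by
      ring
    rw [this]
    exact key
  have hfinal : (S.card : ℝ) + (m : ℝ) < (r : ℝ) + 1 := by linarith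
  have : S.card + m < r + 1 := by exact_mod_cast hfinal
  omega
end
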